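/- arXiv:2210.00571 — 8 statements merged into one kernel-verified Lean document; each statement's English description precedes it below -/
import Mathlib

section
/- Let m be a positive integer and let y_0, y_1, ..., y_m be real numbers satisfying sum_{k=1}^{m} (y_k - y_{k-1}^2 - 1)^2 < 1. Then y_m > y_0^{2^m}. -/
/-!
Every summand is nonnegative, so each one is below `1`, i.e. `|y k - y (k-1)^2 - 1| < 1`, which gives
`y (k-1)^2 < y k`. Iterating the squaring `m` times yields `y 0 ^ 2^m < y m`; positivity of `y 0 ^ 2^k`
for `k ≥ 1` is what lets strict inequalities be squared.
-/

section OrderedRing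

variable {R : Type*} [CommRing R] [LinearOrder R] [IsStrictOrderedRing R]

theorem lt_of_sq_sub_sub_one_lt_one {a b : R} (h : (b - a - 1) ^ 2 < 1) : a < b := by
  nlinarith

theorem pow_two_pow_lt_of_forall_sq_lt_succ (y : ℕ → R) (n : ℕ)
    (hstep : ∀ k < n + 1, y k ^ 2 < y (k + 1)) : y 0 ^ 2 ^ (n + 1) < y (n + 1) := by
  induction n with
  | zero => simpa using hstep 0 one_pos
  | succ n ih =>
    have hlt : y 0 ^ 2 ^ (n + 1) < y (n + 1) := ih fun k hk => hstep k (by omega)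
    have hnonneg : 0 ≤ y 0 ^ 2 ^ (n + 1) := by
      rw [pow_succ, pow_mul]
      exact sq_nonneg _
    calc y 0 ^ 2 ^ (n + 1 + 1) = (y 0 ^ 2 ^ (n + 1)) ^ 2 := by rw [pow_succ 2 (n + 1), pow_mul]
      _ < y (n + 1) ^ 2 := pow_lt_pow_left₀ hlt hnonneg two_ne_zero
      _ < y (n + 1 + 1) := hstep (n + 1) (by omega)

end OrderedRing

theorem stmt_1 (m : ℕ) (hm : 0 < m) (y : ℕ → ℝ)
    (h : ∑ k ∈ Finset.Icc 1 m, (y k - (y (k - 1)) ^ 2 - 1) ^ 2 < 1) :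
    y m > (y 0) ^ (2 ^ m) := by
  obtain ⟨n, rfl⟩ : ∃ n, m = n + 1 := Nat.exists_eq_add_one_of_ne_zero hm.ne'
  refine pow_two_pow_lt_of_forall_sq_lt_succ y n fun k hk => lt_of_sq_sub_sub_one_lt_one ?_
  have hmem : k + 1 ∈ Finset.Icc 1 (n + 1) := Finset.mem_Icc.mpr ⟨by omega, by omega⟩
  have hterm := Finset.single_le_sum (fun i _ => sq_nonneg (y i - y (i - 1) ^ 2 - 1)) hmem
  simpa using hterm.trans_lt h
end

section
/- Let y_0 be a real number with 0 < y_0 < 1/2, m a positive integer, and y_1, ..., y_m real numbers with y_m in [-1,1] satisfying 400 * sum_{k=1}^{m} (y_k - y_{k-1}^2)^2 < y_m^2. Then 0 < y_m^2 and y_m^2 <= y_0^{(5/6) * 2^m}. -/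
/-!
Put `t = |y m|`. The hypothesis bounds every defect: `|y (k+1) - y k ^ 2| ≤ t / 20`.
Since `t ≤ 1`, the interval `(-t/4, t/4)` is mapped into itself by `x ↦ x ^ 2 ± t / 20`,
so no `y k` lies in it (otherwise `y m` would). Hence the defect is at most `|y (k+1)| / 5`,
which gives `(5/4) |y (k+1)| ≤ ((5/4) |y k|) ^ 2`, and iterating,
`t ^ 2 ≤ (((5/4) y 0) ^ 2) ^ 2 ^ m ≤ (y 0 ^ (5/6)) ^ 2 ^ m` because `y 0 < 1/2`.
-/

open Finset

lemma abs_le_sq_add_abs_sub_sq (a b : ℝ) : |b| ≤ a ^ 2 + |b - a ^ 2| := by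
  have := abs_sub_abs_le_abs_sub b (a ^ 2)
  rw [abs_of_nonneg (sq_nonneg a)] at this
  linarith

lemma abs_lt_of_abs_sub_sq_le {y : ℕ → ℝ} {r ε : ℝ} {i j : ℕ} (hr : r ^ 2 + ε ≤ r) (hij : i ≤ j)
    (hstep : ∀ k, i ≤ k → k < j → |y (k + 1) - y k ^ 2| ≤ ε) (hi : |y i| < r) : |y j| < r := by
  induction j, hij using Nat.le_induction with
  | base => exact hi
  | succ j hij ih =>
    have hj : |y j| < r := ih fun k hik hkj => hstep k hik (by omega)
    have hsq : y j ^ 2 < r ^ 2 := by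
      rw [← sq_abs]
      exact pow_lt_pow_left₀ hj (abs_nonneg _) two_ne_zero
    linarith [abs_le_sq_add_abs_sub_sq (y j) (y (j + 1)), hstep j hij (Nat.lt_succ_self j)]

lemma le_pow_two_pow_of_le_sq {z : ℕ → ℝ} {n : ℕ} (hz : ∀ k, 0 ≤ z k)
    (hsq : ∀ k < n, z (k + 1) ≤ z k ^ 2) : z n ≤ z 0 ^ 2 ^ n := by
  induction n with
  | zero => simp
  | succ n ih =>
    calc z (n + 1) ≤ z n ^ 2 := hsq n (Nat.lt_succ_self n)
      _ ≤ (z 0 ^ 2 ^ n) ^ 2 :=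
        pow_le_pow_left₀ (hz n) (ih fun k hk => hsq k (Nat.lt_succ_of_lt hk)) 2
      _ = z 0 ^ 2 ^ (n + 1) := by rw [← pow_mul, pow_succ]

lemma five_fourths_mul_abs_le_of_abs_sub_sq_le {y : ℕ → ℝ} {m : ℕ} (hym : |y m| ≤ 1)
    (hstep : ∀ k < m, |y (k + 1) - y k ^ 2| ≤ |y m| / 20) :
    5 / 4 * |y m| ≤ (5 / 4 * |y 0|) ^ 2 ^ m := by
  have hlarge : ∀ k ≤ m, |y m| / 4 ≤ |y k| := by
    intro k hk
    by_contra! hsmall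
    have hr : (|y m| / 4) ^ 2 + |y m| / 20 ≤ |y m| / 4 := by nlinarith [abs_nonneg (y m)]
    have := abs_lt_of_abs_sub_sq_le hr hk (fun j _ hj => hstep j hj) hsmall
    linarith [abs_nonneg (y m)]
  refine le_pow_two_pow_of_le_sq (z := fun k => 5 / 4 * |y k|) (fun k => by positivity) ?_
  intro k hk
  have hnext := hlarge (k + 1) hk
  have := abs_le_sq_add_abs_sub_sq (y k) (y (k + 1))
  nlinarith [sq_abs (y k), hstep k hk]

lemma five_fourths_mul_sq_le_rpow {a : ℝ} (ha₀ : 0 ≤ a) (ha : a ≤ 16 / 25) :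
    (5 / 4 * a) ^ 2 ≤ a ^ (5 / 6 : ℝ) := by
  have : a ≤ a ^ (5 / 6 : ℝ) := by
    simpa using Real.rpow_le_rpow_of_exponent_ge' ha₀ (by linarith) (by norm_num)
      (by norm_num : (5 / 6 : ℝ) ≤ 1)
  nlinarith

theorem stmt_4_general (m : ℕ) (y : ℕ → ℝ)
    (h0 : 0 < y 0) (h1 : y 0 < 1 / 2) (hym : y m ∈ Set.Icc (-1 : ℝ) 1)
    (h : 400 * ∑ k ∈ Finset.Icc 1 m, (y k - (y (k - 1)) ^ 2) ^ 2 < (y m) ^ 2) :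
    0 < (y m) ^ 2 ∧ (y m) ^ 2 ≤ (y 0) ^ ((5 / 6 : ℝ) * 2 ^ m) := by
  have hsum : 0 ≤ ∑ k ∈ Icc 1 m, (y k - y (k - 1) ^ 2) ^ 2 := sum_nonneg fun _ _ => sq_nonneg _
  refine ⟨by linarith, ?_⟩
  have hstep : ∀ k < m, |y (k + 1) - y k ^ 2| ≤ |y m| / 20 := by
    intro k hk
    have hterm : (y (k + 1) - y k ^ 2) ^ 2 ≤ ∑ j ∈ Icc 1 m, (y j - y (j - 1) ^ 2) ^ 2 :=
      single_le_sum (f := fun j => (y j - y (j - 1) ^ 2) ^ 2) (fun _ _ => sq_nonneg _)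
        (mem_Icc.2 ⟨by omega, hk⟩)
    have : (20 * |y (k + 1) - y k ^ 2|) ^ 2 < |y m| ^ 2 := by
      rw [mul_pow, sq_abs, sq_abs]; linarith
    linarith [lt_of_pow_lt_pow_left₀ 2 (abs_nonneg _) this]
  have hchain := five_fourths_mul_abs_le_of_abs_sub_sq_le (abs_le.2 hym) hstep
  rw [abs_of_pos h0] at hchain
  have hbound : |y m| ≤ (5 / 4 * y 0) ^ 2 ^ m := by linarith [abs_nonneg (y m)]
  calc y m ^ 2 = |y m| ^ 2 := (sq_abs _).symm
    _ ≤ ((5 / 4 * y 0) ^ 2 ^ m) ^ 2 := pow_le_pow_left₀ (abs_nonneg _) hbound 2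
    _ = ((5 / 4 * y 0) ^ 2) ^ 2 ^ m := by rw [← pow_mul, ← pow_mul, Nat.mul_comm]
    _ ≤ (y 0 ^ (5 / 6 : ℝ)) ^ 2 ^ m :=
      pow_le_pow_left₀ (sq_nonneg _) (five_fourths_mul_sq_le_rpow h0.le (by linarith)) _
    _ = y 0 ^ ((5 / 6 : ℝ) * 2 ^ m) := by
      rw [← Real.rpow_mul_natCast h0.le]; push_cast; rfl

theorem stmt_4 (m : ℕ) (hm : 0 < m) (y : ℕ → ℝ)
    (h0 : 0 < y 0) (h1 : y 0 < 1 / 2) (hym : y m ∈ Set.Icc (-1 : ℝ) 1)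
    (h : 400 * ∑ k ∈ Finset.Icc 1 m, (y k - (y (k - 1)) ^ 2) ^ 2 < (y m) ^ 2) :
    0 < (y m) ^ 2 ∧ (y m) ^ 2 ≤ (y 0) ^ ((5 / 6 : ℝ) * 2 ^ m) :=
  stmt_4_general m y h0 h1 hym h
end

section
/- Let y_0 in (0,1/2), m >= 1, and y_1,...,y_m real with |y_m| <= 1 and 400 * sum_{k=1}^{m} (y_k - y_{k-1}^2)^2 < y_m^2. Then for every k in {1,...,m}, |y_k| >= |y_m|/2 and y_k > 0. -/
/-! Each defect `y k - y (k-1)^2` is smaller than `|y m| / 20`. With `|y m| ≤ 1`, once some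
`|y k|` drops below `|y m| / 2` the next one is at most `|y m|^2 / 4 + |y m| / 20 < |y m| / 2`,
so the orbit stays below `|y m| / 2` up to index `m`, which is absurd. Positivity follows since
`y k ≥ y (k-1)^2 - |y m| / 20 > -|y m| / 2`. -/

open Finset

lemma abs_lt_of_sum_sq_lt {ι : Type*} {s : Finset ι} {f : ι → ℝ} {r : ℝ}
    (h : ∑ i ∈ s, f i ^ 2 < r ^ 2) {i : ι} (hi : i ∈ s) : |f i| < |r| :=
  sq_lt_sq.mp ((single_le_sum (fun j _ => sq_nonneg (f j)) hi).trans_lt h)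

lemma abs_lt_half_of_abs_sub_sq_lt {a b c δ : ℝ} (hc : c ≤ 1) (hδ : δ ≤ c / 4)
    (ha : |a| < c / 2) (hb : |b - a ^ 2| < δ) : |b| < c / 2 := by
  have hc0 : 0 < c := by linarith [abs_nonneg a]
  have ha2 : a ^ 2 < c / 4 := by
    have : |a| ^ 2 < (c / 2) ^ 2 := pow_lt_pow_left₀ ha (abs_nonneg a) two_ne_zero
    rw [sq_abs] at this
    nlinarith
  have := abs_sub_abs_le_abs_sub b (a ^ 2)
  rw [abs_of_nonneg (sq_nonneg a)] at this
  linarith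

lemma abs_lt_half_of_approx_sq_orbit {y : ℕ → ℝ} {c δ : ℝ} {k n : ℕ} (hc : c ≤ 1)
    (hδ : δ ≤ c / 4) (hdefect : ∀ j, k < j → j ≤ n → |y j - y (j - 1) ^ 2| < δ)
    (hk : |y k| < c / 2) (hkn : k ≤ n) : |y n| < c / 2 := by
  induction n, hkn using Nat.le_induction with
  | base => exact hk
  | succ n hkn ih =>
    refine abs_lt_half_of_abs_sub_sq_lt hc hδ (ih fun j hj hjn => hdefect j hj (by omega)) ?_
    simpa using hdefect (n + 1) (by omega) le_rfl

theorem stmt_5_general (m : ℕ) (y : ℕ → ℝ)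
    (hym : |y m| ≤ 1)
    (h : 400 * ∑ k ∈ Finset.Icc 1 m, (y k - (y (k - 1)) ^ 2) ^ 2 < (y m) ^ 2) :
    ∀ k ∈ Finset.Icc 1 m, |y m| / 2 ≤ |y k| ∧ 0 < y k := by
  have hym0 : 0 < |y m| := by
    have := sum_nonneg fun k (_ : k ∈ Icc 1 m) => sq_nonneg (y k - y (k - 1) ^ 2)
    have : 0 < y m ^ 2 := by linarith
    exact abs_pos.mpr ((pow_ne_zero_iff two_ne_zero).mp this.ne')
  have hdefect : ∀ k ∈ Icc 1 m, |y k - y (k - 1) ^ 2| < |y m| / 20 := by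
    intro k hk
    have h' : ∑ j ∈ Icc 1 m, (20 * (y j - y (j - 1) ^ 2)) ^ 2 < y m ^ 2 := by
      convert h using 1
      rw [mul_sum]
      ring_nf
    have := abs_lt_of_sum_sq_lt h' hk
    rw [abs_mul, abs_of_pos (by norm_num : (0 : ℝ) < 20)] at this
    linarith
  have hlarge : ∀ k ∈ Icc 1 m, |y m| / 2 ≤ |y k| := by
    intro k hk
    by_contra! hsmall
    have := abs_lt_half_of_approx_sq_orbit hym (by linarith)
      (fun j hkj hjm => hdefect j (mem_Icc.mpr ⟨by omega, hjm⟩)) hsmall (mem_Icc.mp hk).2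
    linarith
  intro k hk
  refine ⟨hlarge k hk, ?_⟩
  have hk_lower : y (k - 1) ^ 2 - |y m| / 20 < y k := by
    linarith [(abs_lt.mp (hdefect k hk)).1]
  cases abs_cases (y k) <;> linarith [hlarge k hk, sq_nonneg (y (k - 1))]

theorem stmt_5 (m : ℕ) (hm : 1 ≤ m) (y : ℕ → ℝ)
    (h0 : 0 < y 0) (h1 : y 0 < 1 / 2) (hym : |y m| ≤ 1)
    (h : 400 * ∑ k ∈ Finset.Icc 1 m, (y k - (y (k - 1)) ^ 2) ^ 2 < (y m) ^ 2) :
    ∀ k ∈ Finset.Icc 1 m, |y m| / 2 ≤ |y k| ∧ 0 < y k :=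
  stmt_5_general m y hym h
end

section
/- Let y_0 in (0,1/2), m >= 1, and y_1,...,y_m real with y_m in [-1,1] satisfying 400 * sum_{k=1}^{m} (y_k - y_{k-1}^2)^2 < y_m^2. Define x_k = log(y_k)/log(y_0) for k = 0,...,m. Then |x_k - 2*x_{k-1}| <= 1/6 for all k in {1,...,m}. -/
/-! Write `c = y m` and `eᵢ = yᵢ - yᵢ₋₁²`. The energy bound gives `|eᵢ| < c / 20` for every `i`,
which forces `c > 0`. Running the recursion backwards from `m`, every `yᵢ` stays above `9c/10`
(this uses `c ≤ 1`), so `yᵢ₋₁² ≥ 17c/20` and `yᵢ / yᵢ₋₁²` lies within a factor `1 ± 1/17` of `1`.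
Hence `|log yᵢ - 2 log yᵢ₋₁| ≤ 1/16`, while `|log y₀| ≥ log 2 > 3/8`. -/

open Real Finset

lemma abs_lt_abs_of_sum_sq_lt {ι : Type*} {s : Finset ι} {f : ι → ℝ} {b : ℝ}
    (h : ∑ i ∈ s, f i ^ 2 < b ^ 2) {i : ι} (hi : i ∈ s) : |f i| < |b| :=
  sq_lt_sq.mp <| (single_le_sum (fun j _ => sq_nonneg (f j)) hi).trans_lt h

lemma pos_of_abs_sub_sq_lt_abs {a b : ℝ} (h : |a - b ^ 2| < |a|) : 0 < a := by
  by_contra! ha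
  rw [abs_of_nonpos ha, abs_of_nonpos (by nlinarith [sq_nonneg b])] at h
  nlinarith [sq_nonneg b]

lemma nine_div_ten_mul_le_of_abs_sub_sq_le {m : ℕ} {y : ℕ → ℝ} (h0 : 0 < y 0) (hm : 0 < y m)
    (hm_le : y m ≤ 1) (hdev : ∀ i ∈ Icc 1 m, |y i - y (i - 1) ^ 2| ≤ y m / 20) {k : ℕ}
    (hk : k ≤ m) : 9 / 10 * y m ≤ y k := by
  induction hk using Nat.decreasingInduction with
  | self => linarith
  | of_succ k hk ih =>
    have hsucc := abs_le.mp (hdev (k + 1) (mem_Icc.mpr ⟨by omega, hk⟩))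
    simp only [Nat.add_sub_cancel] at hsucc
    have hsq : (9 / 10 * y m) ^ 2 ≤ y k ^ 2 := by nlinarith
    -- `y k ≥ -c/20`: it is `y 0 > 0`, or a square perturbed by at most `c/20`.
    have hlow : -(9 / 10 * y m) < y k := by
      rcases Nat.eq_zero_or_pos k with rfl | hkpos
      · linarith
      · have := abs_le.mp (hdev k (mem_Icc.mpr ⟨hkpos, hk.le⟩))
        nlinarith [sq_nonneg (y (k - 1))]
    by_contra! hlt
    exact (sq_lt_sq' hlow hlt).not_ge hsq

lemma abs_log_sub_log_le {b x t : ℝ} (hx : 0 < x) (ht : t < 1) (h : |b - x| ≤ t * x) :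
    |log b - log x| ≤ t / (1 - t) := by
  obtain ⟨hlo, hhi⟩ := abs_le.mp h
  have ht0 : 0 ≤ t := nonneg_of_mul_nonneg_left ((abs_nonneg _).trans h) hx
  have hb : (1 - t) * x ≤ b := by linarith
  have hb0 : 0 < b := (mul_pos (by linarith) hx).trans_le hb
  have hupper : log b - log x ≤ t := by
    rw [← log_div hb0.ne' hx.ne']
    refine (log_le_sub_one_of_pos (div_pos hb0 hx)).trans ?_
    rw [div_sub_one hx.ne', div_le_iff₀ hx]
    linarith
  have hlower : log x - log b ≤ t / (1 - t) := by
    rw [← log_div hx.ne' hb0.ne']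
    refine (log_le_sub_one_of_pos (div_pos hx hb0)).trans ?_
    rw [div_sub_one hb0.ne', div_le_div_iff₀ hb0 (by linarith)]
    nlinarith
  rw [abs_le]
  constructor
  · linarith
  · exact hupper.trans (le_div_self ht0 (by linarith) (by linarith))

lemma log_two_le_abs_log {x : ℝ} (hx : 0 < x) (hx2 : x < 1 / 2) : log 2 ≤ |log x| := by
  rw [abs_of_neg (log_neg hx (by linarith)), ← log_inv]
  exact log_le_log (by norm_num) ((le_inv_comm₀ (by norm_num) hx).mpr (by linarith))

theorem stmt_6 (m : ℕ) (hm : 1 ≤ m) (y : ℕ → ℝ)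
    (h0 : 0 < y 0) (h1 : y 0 < 1 / 2) (hym : y m ∈ Set.Icc (-1 : ℝ) 1)
    (h : 400 * ∑ k ∈ Finset.Icc 1 m, (y k - (y (k - 1)) ^ 2) ^ 2 < (y m) ^ 2) :
    ∀ k ∈ Finset.Icc 1 m,
      |Real.log (y k) / Real.log (y 0) - 2 * (Real.log (y (k - 1)) / Real.log (y 0))| ≤ 1 / 6 := by
  have hdev20 : ∀ k ∈ Icc 1 m, 20 * |y k - y (k - 1) ^ 2| < |y m| := fun k hk => by
    have := abs_lt_abs_of_sum_sq_lt (f := fun i => 20 * (y i - y (i - 1) ^ 2))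
      (by simp only [mul_pow, ← mul_sum]; linarith) hk
    rwa [abs_mul, abs_of_pos (by norm_num : (0 : ℝ) < 20)] at this
  have hpos : 0 < y m := pos_of_abs_sub_sq_lt_abs (b := y (m - 1)) <| by
    linarith [hdev20 m (mem_Icc.mpr ⟨hm, le_rfl⟩), abs_nonneg (y m - y (m - 1) ^ 2)]
  have hdev : ∀ k ∈ Icc 1 m, |y k - y (k - 1) ^ 2| ≤ y m / 20 := fun k hk => by
    linarith [hdev20 k hk, abs_of_pos hpos]
  intro k hk
  have hyk := nine_div_ten_mul_le_of_abs_sub_sq_le h0 hpos hym.2 hdev (mem_Icc.mp hk).2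
  have hsq : 17 / 20 * y m ≤ y (k - 1) ^ 2 := by linarith [(abs_le.mp (hdev k hk)).2]
  have hlog : |log (y k) - 2 * log (y (k - 1))| ≤ 1 / 16 := by
    have := abs_log_sub_log_le (b := y k) (x := y (k - 1) ^ 2) (t := 1 / 17) (by linarith)
      (by norm_num) (by linarith [hdev k hk])
    rwa [log_pow, Nat.cast_ofNat, show (1 / 17 : ℝ) / (1 - 1 / 17) = 1 / 16 by norm_num] at this
  calc |log (y k) / log (y 0) - 2 * (log (y (k - 1)) / log (y 0))|
      = |log (y k) - 2 * log (y (k - 1))| / |log (y 0)| := by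
        rw [← abs_div, sub_div, mul_div_assoc]
    _ ≤ 1 / 16 / log 2 :=
        div_le_div₀ (by norm_num) hlog (log_pos one_lt_two) (log_two_le_abs_log h0 h1)
    _ ≤ 1 / 6 := by rw [div_le_iff₀ (log_pos one_lt_two)]; linarith [log_two_gt_d9]
end

section
/- Let phi : R^n -> Prop define a set S = {x : phi x}, and suppose for all x,y in S and all t in [0,1], t*x + (1-t)*y is in S. Let T be the boundary of the cube [-1,1]^n, i.e., T = {x in [-1,1]^n : exists i, |x_i| = 1}, and let f : R^n -> R be continuous. If n >= 2 and the set S' = {x in (-1,1)^n : f(x) > 0} ∪ T is convex, then f(x) > 0 for all x in (-1,1)^n. Conversely, if f(x) > 0 for all x in (-1,1)^n then S' = [-1,1]^n, hence convex. -/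
/-!
Every point `x` of the open cube lies on the segment joining the two boundary points obtained
from `x` by setting one coordinate to `-1` and to `1`. So if `S'` is convex it contains `x`, and
since `x` is not on the boundary `T`, this means `0 < f x`. Conversely, the closed cube is the
union of the open cube and `T`.
-/

open Set Function

lemma mem_Icc_and_abs_ne_one_iff_mem_Ioo {a : ℝ} : a ∈ Icc (-1) 1 ∧ |a| ≠ 1 ↔ a ∈ Ioo (-1) 1 := by
  rw [mem_Icc, mem_Ioo, ← abs_le, ← abs_lt, lt_iff_le_and_ne]

lemma forall_mem_Ioo_or_exists_abs_eq_one {ι : Type*} {x : ι → ℝ}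
    (hx : ∀ i, x i ∈ Icc (-1) 1) : (∀ i, x i ∈ Ioo (-1) 1) ∨ ∃ i, |x i| = 1 := by
  by_contra! h
  obtain ⟨i, hi⟩ := h.1
  exact hi (mem_Icc_and_abs_ne_one_iff_mem_Ioo.1 ⟨hx i, h.2 i⟩)

lemma update_mem_cube_boundary {ι : Type*} [DecidableEq ι] {x : ι → ℝ}
    (hx : ∀ j, x j ∈ Icc (-1) 1) (i : ι) {c : ℝ} (hc : |c| = 1) :
    (∀ j, update x i c j ∈ Icc (-1) 1) ∧ ∃ j, |update x i c j| = 1 := by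
  refine ⟨fun j => ?_, i, by simpa using hc⟩
  rcases eq_or_ne j i with rfl | hj
  · simpa [← abs_le] using hc.le
  · simpa [hj] using hx j

lemma EuclideanSpace.mem_segment_update {ι : Type*} [DecidableEq ι] (x : EuclideanSpace ℝ ι)
    (i : ι) {a b : ℝ} (hx : x i ∈ Icc a b) :
    x ∈ segment ℝ (WithLp.toLp 2 (update x.ofLp i a)) (WithLp.toLp 2 (update x.ofLp i b)) := by
  have hpi : x.ofLp ∈ segment ℝ (update x.ofLp i a) (update x.ofLp i b) := by
    rw [← Pi.image_update_segment, segment_eq_Icc (hx.1.trans hx.2)]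
    exact ⟨x i, hx, update_eq_self i x.ofLp⟩
  simpa using image_segment ℝ (WithLp.linearEquiv 2 ℝ (ι → ℝ)).symm.toLinearMap.toAffineMap _ _ ▸
    mem_image_of_mem _ hpi

theorem stmt_15_general (n : ℕ) (hn : 2 ≤ n) (f : EuclideanSpace ℝ (Fin n) → ℝ)
    (T : Set (EuclideanSpace ℝ (Fin n)))
    (hT : T = {x | (∀ i, x i ∈ Set.Icc (-1 : ℝ) 1) ∧ ∃ i, |x i| = 1})
    (S' : Set (EuclideanSpace ℝ (Fin n)))
    (hS' : S' = {x | (∀ i, x i ∈ Set.Ioo (-1 : ℝ) 1) ∧ 0 < f x} ∪ T) :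
    (Convex ℝ S' → ∀ x : EuclideanSpace ℝ (Fin n),
        (∀ i, x i ∈ Set.Ioo (-1 : ℝ) 1) → 0 < f x) ∧
    ((∀ x : EuclideanSpace ℝ (Fin n), (∀ i, x i ∈ Set.Ioo (-1 : ℝ) 1) → 0 < f x) →
        S' = {x | ∀ i, x i ∈ Set.Icc (-1 : ℝ) 1}) := by
  refine ⟨fun hconv x hx => ?_, fun hpos => ?_⟩
  · have hx' : ∀ j, x j ∈ Icc (-1 : ℝ) 1 := fun j => Ioo_subset_Icc_self (hx j)
    let i : Fin n := ⟨0, by omega⟩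
    have hend (c : ℝ) (hc : |c| = 1) : WithLp.toLp 2 (update x.ofLp i c) ∈ S' := by
      rw [hS', hT]
      exact Or.inr (update_mem_cube_boundary hx' i hc)
    have hxS : x ∈ S' := hconv.segment_subset (hend (-1) (by simp)) (hend 1 (by simp))
      (EuclideanSpace.mem_segment_update x i (hx' i))
    rw [hS', hT] at hxS
    rcases hxS with ⟨-, hfx⟩ | ⟨-, j, hj⟩
    · exact hfx
    · exact absurd hj (mem_Icc_and_abs_ne_one_iff_mem_Ioo.2 (hx j)).2
  · ext x
    rw [hS', hT]
    constructor
    · rintro (⟨hx, -⟩ | ⟨hx, -⟩)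
      exacts [fun i => Ioo_subset_Icc_self (hx i), hx]
    · intro hx
      rcases forall_mem_Ioo_or_exists_abs_eq_one hx with hx' | hbd
      exacts [Or.inl ⟨hx', hpos x hx'⟩, Or.inr ⟨hx, hbd⟩]

theorem stmt_15 (n : ℕ) (hn : 2 ≤ n) (f : EuclideanSpace ℝ (Fin n) → ℝ)
    (hf : Continuous f)
    (T : Set (EuclideanSpace ℝ (Fin n)))
    (hT : T = {x | (∀ i, x i ∈ Set.Icc (-1 : ℝ) 1) ∧ ∃ i, |x i| = 1})
    (S' : Set (EuclideanSpace ℝ (Fin n)))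
    (hS' : S' = {x | (∀ i, x i ∈ Set.Ioo (-1 : ℝ) 1) ∧ 0 < f x} ∪ T) :
    (Convex ℝ S' → ∀ x : EuclideanSpace ℝ (Fin n),
        (∀ i, x i ∈ Set.Ioo (-1 : ℝ) 1) → 0 < f x) ∧
    ((∀ x : EuclideanSpace ℝ (Fin n), (∀ i, x i ∈ Set.Ioo (-1 : ℝ) 1) → 0 < f x) →
        S' = {x | ∀ i, x i ∈ Set.Icc (-1 : ℝ) 1}) :=
  stmt_15_general n hn f T hT S' hS'
end

section
/- Let S be a subset of R^d and r >= 0. There exists x in R^d such that ||x - y|| <= r for all y in S if and only if for every d+1 points y_1, ..., y_{d+1} in S there exists x in R^d with ||x - y_k|| <= r for all k in {1,...,d+1}. -/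
open Finset Module

theorem Finset.exists_fin_range_eq {α : Type*} {s : Finset α} {m : ℕ} (hs : s.Nonempty)
    (hm : #s ≤ m) : ∃ y : Fin m → α, Set.range y = s := by
  have : Nonempty s := hs.to_subtype
  have h_inj : Function.Injective (Fin.castLE hm ∘ s.equivFin) :=
    (Fin.castLE_injective hm).comp s.equivFin.injective
  refine ⟨Subtype.val ∘ Function.invFun (Fin.castLE hm ∘ s.equivFin), ?_⟩
  rw [Set.range_comp, (Function.invFun_surjective h_inj).range_eq, Set.image_univ,
    Subtype.range_coe_subtype, Finset.setOfPred_mem]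

theorem Convex.helly_theorem_compact_of_forall_fin {𝕜 E ι : Type*} [Field 𝕜] [LinearOrder 𝕜]
    [IsStrictOrderedRing 𝕜] [AddCommGroup E] [Module 𝕜 E] [FiniteDimensional 𝕜 E]
    [TopologicalSpace E] [T2Space E] {F : ι → Set E} {n : ℕ} (hn : finrank 𝕜 E ≤ n)
    (h_convex : ∀ i, Convex 𝕜 (F i)) (h_compact : ∀ i, IsCompact (F i))
    (h_inter : ∀ y : Fin (n + 1) → ι, (⋂ k, F (y k)).Nonempty) :
    (⋂ i, F i).Nonempty := by
  refine Convex.helly_theorem_compact' h_convex h_compact fun I hI => ?_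
  rcases I.eq_empty_or_nonempty with rfl | hI_ne
  · simp
  obtain ⟨y, hy⟩ := I.exists_fin_range_eq (m := n + 1) hI_ne (by omega)
  rw [← Finset.set_biInter_coe, ← hy, Set.biInter_range]
  exact h_inter y

theorem stmt_17_general (d : ℕ) (S : Set (EuclideanSpace ℝ (Fin d))) (r : ℝ) :
    (∃ x : EuclideanSpace ℝ (Fin d), ∀ y ∈ S, ‖x - y‖ ≤ r) ↔
      ∀ y : Fin (d + 1) → EuclideanSpace ℝ (Fin d), (∀ k, y k ∈ S) →
        ∃ x : EuclideanSpace ℝ (Fin d), ∀ k, ‖x - y k‖ ≤ r := by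
  refine ⟨fun ⟨x, hx⟩ y hy => ⟨x, fun k => hx _ (hy k)⟩, fun h => ?_⟩
  have h_balls : (⋂ y : S, Metric.closedBall (y : EuclideanSpace ℝ (Fin d)) r).Nonempty := by
    refine Convex.helly_theorem_compact_of_forall_fin (𝕜 := ℝ) finrank_euclideanSpace_fin.le
      (fun _ => convex_closedBall _ _) (fun _ => isCompact_closedBall _ _) fun y => ?_
    obtain ⟨x, hx⟩ := h (fun k => y k) fun k => (y k).2
    exact ⟨x, Set.mem_iInter.2 fun k => mem_closedBall_iff_norm.2 (hx k)⟩
  obtain ⟨x, hx⟩ := h_balls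
  exact ⟨x, fun y hy => mem_closedBall_iff_norm.1 (Set.mem_iInter.1 hx ⟨y, hy⟩)⟩

theorem stmt_17 (d : ℕ) (S : Set (EuclideanSpace ℝ (Fin d))) (r : ℝ) (hr : 0 ≤ r) :
    (∃ x : EuclideanSpace ℝ (Fin d), ∀ y ∈ S, ‖x - y‖ ≤ r) ↔
      ∀ y : Fin (d + 1) → EuclideanSpace ℝ (Fin d), (∀ k, y k ∈ S) →
        ∃ x : EuclideanSpace ℝ (Fin d), ∀ k, ‖x - y k‖ ≤ r :=
  stmt_17_general d S r
end

section
/- Let y_1, ..., y_{d+1} be points in R^d and r >= 0. There exists x in R^d with ||x - y_k||^2 <= r^2 for all k in {1,...,d+1} if and only if for all nonnegative reals z_1,...,z_{d+1} with sum_{k} z_k = 1, one has sum_{k=1}^{d+1} sum_{l=1}^{d+1} z_k * z_l * ||y_k - y_l||^2 <= 2*r^2. -/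
/-!
For probability weights `z` with mean `c = ∑ z k • y k`, the double sum equals `2 V(z)`, where
`V(z) = ∑ z k ‖y k‖² - ‖c‖² = ∑ z k ‖y k - x‖² - ‖c - x‖²` for every `x`; this gives the forward
direction. Conversely, let `z` maximize `V` over the simplex. Moving mass `t` from `z` to the vertex
`k` turns `V` into `(1 - t) V(z) + t (1 - t) ‖c - y k‖²`, so maximality forces
`‖c - y k‖² ≤ V(z) ≤ r²`, and `c` is the required centre.
-/

open Finset Filter Topology

section

variable {ι E : Type*} [Fintype ι] [NormedAddCommGroup E] [InnerProductSpace ℝ E]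

noncomputable def weightedVariance (z : ι → ℝ) (y : ι → E) : ℝ :=
  ∑ k, z k * ‖y k‖ ^ 2 - ‖∑ k, z k • y k‖ ^ 2

lemma sum_mul_norm_sub_sq {z : ι → ℝ} (hz : ∑ k, z k = 1) (y : ι → E) (x : E) :
    ∑ k, z k * ‖y k - x‖ ^ 2 = weightedVariance z y + ‖∑ k, z k • y k - x‖ ^ 2 := by
  have hinner : ∑ k, z k * inner ℝ (y k) x = inner ℝ (∑ k, z k • y k) x := by
    simp only [sum_inner, real_inner_smul_left]
  rw [weightedVariance, norm_sub_sq_real _ x, ← hinner]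
  simp only [norm_sub_sq_real, mul_add, mul_sub, sum_add_distrib, sum_sub_distrib, ← sum_mul, hz,
    one_mul, mul_left_comm _ (2 : ℝ), ← mul_sum]
  ring

lemma sum_sum_mul_mul_norm_sub_sq {z : ι → ℝ} (hz : ∑ k, z k = 1) (y : ι → E) :
    ∑ k, ∑ l, z k * z l * ‖y k - y l‖ ^ 2 = 2 * weightedVariance z y := by
  calc ∑ k, ∑ l, z k * z l * ‖y k - y l‖ ^ 2
      = ∑ l, z l * (weightedVariance z y + ‖∑ k, z k • y k - y l‖ ^ 2) := by
        rw [sum_comm]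
        refine sum_congr rfl fun l _ => ?_
        rw [← sum_mul_norm_sub_sq hz, mul_sum]
        exact sum_congr rfl fun k _ => by ring
    _ = weightedVariance z y + ∑ l, z l * ‖y l - ∑ k, z k • y k‖ ^ 2 := by
        simp only [mul_add, sum_add_distrib, ← sum_mul, hz, one_mul, norm_sub_rev]
    _ = 2 * weightedVariance z y := by
        rw [sum_mul_norm_sub_sq hz, sub_self, norm_zero]
        ring

lemma norm_one_sub_smul_add_smul_sq (a b : E) (t : ℝ) :
    ‖(1 - t) • a + t • b‖ ^ 2 = (1 - t) * ‖a‖ ^ 2 + t * ‖b‖ ^ 2 - t * (1 - t) * ‖a - b‖ ^ 2 := by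
  simp only [← real_inner_self_eq_norm_sq, inner_add_left, inner_add_right, inner_sub_left,
    inner_sub_right, real_inner_smul_left, real_inner_smul_right, real_inner_comm a b]
  ring

lemma weightedVariance_one_sub_smul_add_smul (z w : ι → ℝ) (y : ι → E) (t : ℝ) :
    weightedVariance ((1 - t) • z + t • w) y = (1 - t) * weightedVariance z y
      + t * weightedVariance w y + t * (1 - t) * ‖∑ k, z k • y k - ∑ k, w k • y k‖ ^ 2 := by
  have hsum : ∑ k, ((1 - t) • z + t • w) k • y k
      = (1 - t) • ∑ k, z k • y k + t • ∑ k, w k • y k := by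
    simp only [Pi.add_apply, Pi.smul_apply, smul_eq_mul, add_smul, mul_smul, sum_add_distrib,
      smul_sum]
  simp only [weightedVariance]
  rw [hsum, norm_one_sub_smul_add_smul_sq]
  simp only [Pi.add_apply, Pi.smul_apply, smul_eq_mul, add_mul, mul_assoc, sum_add_distrib,
    ← mul_sum]
  ring

lemma weightedVariance_single [DecidableEq ι] (y : ι → E) (k : ι) :
    weightedVariance (Pi.single k 1) y = 0 := by
  simp [weightedVariance, Pi.single_apply]

lemma sum_single_smul [DecidableEq ι] (y : ι → E) (k : ι) :
    ∑ j, (Pi.single k 1 : ι → ℝ) j • y j = y k := by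
  simp [Pi.single_apply]

lemma norm_sub_sq_le_weightedVariance_of_isMaxOn {z : ι → ℝ} {y : ι → E}
    (hz : z ∈ stdSimplex ℝ ι) (hmax : IsMaxOn (weightedVariance · y) (stdSimplex ℝ ι) z) (k : ι) :
    ‖∑ j, z j • y j - y k‖ ^ 2 ≤ weightedVariance z y := by
  classical
  set A := ‖∑ j, z j • y j - y k‖ ^ 2
  have hstep : ∀ t ∈ Set.Ioo (0 : ℝ) 1, (1 - t) * A ≤ weightedVariance z y := by
    rintro t ⟨ht0, ht1⟩
    have hmem : (1 - t) • z + t • Pi.single k 1 ∈ stdSimplex ℝ ι :=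
      convex_stdSimplex ℝ ι hz (single_mem_stdSimplex ℝ k) (by linarith) ht0.le (by ring)
    have hle : weightedVariance ((1 - t) • z + t • Pi.single k 1) y ≤ weightedVariance z y :=
      hmax hmem
    rw [weightedVariance_one_sub_smul_add_smul, weightedVariance_single, sum_single_smul] at hle
    exact (mul_le_mul_iff_of_pos_left ht0).mp (by linarith)
  have hlim : Tendsto (fun t => (1 - t) * A) (𝓝[>] 0) (𝓝 A) := by
    have hcont : Continuous fun t : ℝ => (1 - t) * A := by fun_prop
    simpa using (hcont.tendsto 0).mono_left nhdsWithin_le_nhds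
  exact le_of_tendsto hlim (eventually_of_mem (Ioo_mem_nhdsGT one_pos) hstep)

lemma exists_isMaxOn_weightedVariance [Nonempty ι] (y : ι → E) :
    ∃ z ∈ stdSimplex ℝ ι, IsMaxOn (weightedVariance · y) (stdSimplex ℝ ι) z := by
  classical
  refine (isCompact_stdSimplex ℝ ι).exists_isMaxOn
    ⟨_, single_mem_stdSimplex ℝ (Classical.arbitrary ι)⟩ ?_
  unfold weightedVariance
  fun_prop

end

theorem stmt_18_general (d : ℕ) (y : Fin (d + 1) → EuclideanSpace ℝ (Fin d)) (r : ℝ) :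
    (∃ x : EuclideanSpace ℝ (Fin d), ∀ k, ‖x - y k‖ ^ 2 ≤ r ^ 2) ↔
      ∀ z : Fin (d + 1) → ℝ, (∀ k, 0 ≤ z k) → ∑ k, z k = 1 →
        ∑ k, ∑ l, z k * z l * ‖y k - y l‖ ^ 2 ≤ 2 * r ^ 2 := by
  constructor
  · rintro ⟨x, hx⟩ z hz0 hz1
    calc ∑ k, ∑ l, z k * z l * ‖y k - y l‖ ^ 2 = 2 * weightedVariance z y :=
          sum_sum_mul_mul_norm_sub_sq hz1 y
      _ ≤ 2 * ∑ k, z k * ‖y k - x‖ ^ 2 := by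
          rw [sum_mul_norm_sub_sq hz1 y x]
          linarith [sq_nonneg ‖∑ k, z k • y k - x‖]
      _ ≤ 2 * ∑ k, z k * r ^ 2 := by
          gcongr 2 * ∑ k, z k * ?_ with k
          · exact hz0 k
          · rw [norm_sub_rev]; exact hx k
      _ = 2 * r ^ 2 := by rw [← sum_mul, hz1, one_mul]
  · intro h
    obtain ⟨z, hz, hmax⟩ := exists_isMaxOn_weightedVariance y
    have hvar : 2 * weightedVariance z y ≤ 2 * r ^ 2 := by
      rw [← sum_sum_mul_mul_norm_sub_sq hz.2]; exact h z hz.1 hz.2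
    exact ⟨∑ k, z k • y k, fun k =>
      (norm_sub_sq_le_weightedVariance_of_isMaxOn hz hmax k).trans (by linarith)⟩

theorem stmt_18 (d : ℕ) (y : Fin (d + 1) → EuclideanSpace ℝ (Fin d)) (r : ℝ) (hr : 0 ≤ r) :
    (∃ x : EuclideanSpace ℝ (Fin d), ∀ k, ‖x - y k‖ ^ 2 ≤ r ^ 2) ↔
      ∀ z : Fin (d + 1) → ℝ, (∀ k, 0 ≤ z k) → ∑ k, z k = 1 →
        ∑ k, ∑ l, z k * z l * ‖y k - y l‖ ^ 2 ≤ 2 * r ^ 2 :=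
  stmt_18_general d y r
end

section
/- Let f : R^n × R^m -> R be continuous, and define g : R^n × R^m × R × R -> R^n × R by g(x,y,s,t) = (x, s - (s*f(x,y))^2 - t^2). Suppose that for every x in [-1,1]^n there exists y in [-1,1]^m with f(x,y) = 0. Then for every x in [-1,1]^n and every c in R there exist y in [-1,1]^m and s,t in R with g(x,y,s,t) = (x,c). Conversely, if there exists x in [-1,1]^n with f(x,y) != 0 for all y in [-1,1]^m, then there exists c in R such that (x,c) is not in the image of ([-1,1]^n × [-1,1]^m × R × R) under g. -/
/-!
Where `f (x, y) = 0` the second coordinate of `g` is `s - t ^ 2`, which takes every value.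
Where `f (x, ·)` has no zero on the compact cube, `f (x, ·) ^ 2 ≥ ε > 0` there, so the second
coordinate is at most `s - ε * s ^ 2 ≤ 1 / (4 * ε)` and larger values are missed.
-/

open Set

lemma isCompact_setOf_forall_apply_mem_Icc {ι : Type*} [Fintype ι] (a b : ℝ) :
    IsCompact {y : EuclideanSpace ℝ ι | ∀ j, y j ∈ Icc a b} := by
  have hpi : {y : EuclideanSpace ℝ ι | ∀ j, y j ∈ Icc a b} =
      WithLp.toLp 2 '' pi univ fun _ => Icc a b := by
    ext y
    exact ⟨fun hy => ⟨WithLp.ofLp y, mem_univ_pi.mpr hy, rfl⟩,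
      by rintro ⟨z, hz, rfl⟩; exact mem_univ_pi.mp hz⟩
  rw [hpi]
  exact (isCompact_univ_pi fun _ => isCompact_Icc).image (PiLp.continuous_toLp 2 _)

lemma IsCompact.exists_pos_le_sq {X : Type*} [TopologicalSpace X] {K : Set X}
    (hK : IsCompact K) {h : X → ℝ} (hh : ContinuousOn h K) (hne : ∀ y ∈ K, h y ≠ 0) :
    ∃ ε > 0, ∀ y ∈ K, ε ≤ h y ^ 2 := by
  rcases K.eq_empty_or_nonempty with rfl | hKne
  · exact ⟨1, one_pos, by simp⟩
  obtain ⟨y₀, hy₀, hmin⟩ := hK.exists_isMinOn hKne (hh.pow 2)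
  exact ⟨h y₀ ^ 2, by positivity [hne y₀ hy₀], fun y hy => hmin hy⟩

lemma sub_mul_sq_le_inv_four_mul {ε : ℝ} (hε : 0 < ε) (s : ℝ) :
    s - ε * s ^ 2 ≤ (4 * ε)⁻¹ := by
  have hsq : 0 ≤ ε * (s - (2 * ε)⁻¹) ^ 2 := by positivity
  have hexpand : ε * (s - (2 * ε)⁻¹) ^ 2 = ε * s ^ 2 - s + (4 * ε)⁻¹ := by
    field_simp
    ring
  linarith

lemma sub_sq_sub_sq_le_inv_four_mul {ε a : ℝ} (hε : 0 < ε) (ha : ε ≤ a ^ 2) (s t : ℝ) :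
    s - (s * a) ^ 2 - t ^ 2 ≤ (4 * ε)⁻¹ :=
  calc s - (s * a) ^ 2 - t ^ 2 ≤ s - ε * s ^ 2 := by
        have hmul := mul_le_mul_of_nonneg_right ha (sq_nonneg s)
        nlinarith [sq_nonneg t]
    _ ≤ (4 * ε)⁻¹ := sub_mul_sq_le_inv_four_mul hε s

theorem stmt_19 (n m : ℕ)
    (f : EuclideanSpace ℝ (Fin n) × EuclideanSpace ℝ (Fin m) → ℝ) (hf : Continuous f)
    (g : EuclideanSpace ℝ (Fin n) × EuclideanSpace ℝ (Fin m) × ℝ × ℝ →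
        EuclideanSpace ℝ (Fin n) × ℝ)
    (hg : ∀ x y s t, g (x, y, s, t) = (x, s - (s * f (x, y)) ^ 2 - t ^ 2)) :
    ((∀ x : EuclideanSpace ℝ (Fin n), (∀ i, x i ∈ Set.Icc (-1 : ℝ) 1) →
        ∃ y : EuclideanSpace ℝ (Fin m), (∀ j, y j ∈ Set.Icc (-1 : ℝ) 1) ∧ f (x, y) = 0) →
      ∀ x : EuclideanSpace ℝ (Fin n), (∀ i, x i ∈ Set.Icc (-1 : ℝ) 1) → ∀ c : ℝ,
        ∃ y : EuclideanSpace ℝ (Fin m), (∀ j, y j ∈ Set.Icc (-1 : ℝ) 1) ∧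
          ∃ s t : ℝ, g (x, y, s, t) = (x, c)) ∧
    ((∃ x : EuclideanSpace ℝ (Fin n), (∀ i, x i ∈ Set.Icc (-1 : ℝ) 1) ∧
        ∀ y : EuclideanSpace ℝ (Fin m), (∀ j, y j ∈ Set.Icc (-1 : ℝ) 1) → f (x, y) ≠ 0) →
      ∃ x : EuclideanSpace ℝ (Fin n), (∀ i, x i ∈ Set.Icc (-1 : ℝ) 1) ∧ ∃ c : ℝ,
        ∀ x' : EuclideanSpace ℝ (Fin n), (∀ i, x' i ∈ Set.Icc (-1 : ℝ) 1) →
        ∀ y : EuclideanSpace ℝ (Fin m), (∀ j, y j ∈ Set.Icc (-1 : ℝ) 1) →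
        ∀ s t : ℝ, g (x', y, s, t) ≠ (x, c)) := by
  constructor
  · intro hzero x hx c
    obtain ⟨y, hy, hfy⟩ := hzero x hx
    exact ⟨y, hy, c, 0, by simp [hg, hfy]⟩
  · rintro ⟨x, hx, hne⟩
    obtain ⟨ε, hε, hbound⟩ := (isCompact_setOf_forall_apply_mem_Icc (-1) 1).exists_pos_le_sq
      (hf.comp (Continuous.prodMk_right x)).continuousOn hne
    refine ⟨x, hx, (4 * ε)⁻¹ + 1, fun x' _ y hy s t heq => ?_⟩
    rw [hg, Prod.mk.injEq] at heq
    obtain ⟨rfl, hc⟩ := heq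
    have hle : s - (s * f (x', y)) ^ 2 - t ^ 2 ≤ (4 * ε)⁻¹ :=
      sub_sq_sub_sq_le_inv_four_mul hε (hbound y hy) s t
    linarith
end
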